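/- Rank bound for laminated homotopies (key step in the invariance of the transport under laminated rank-2 homotopy): let E be a real normed space and H : ℝ³ → E a smooth map (coordinates (r,s,t)) such that for every (r,s) ∈ ℝ² at least one of the following holds: (i) for every t there exists (a,b) ≠ (0,0) with a·∂H/∂r(r,s,t) + b·∂H/∂t(r,s,t) = 0; (ii) for every t there exists (a,b) ≠ (0,0) with a·∂H/∂s(r,s,t) + b·∂H/∂t(r,s,t) = 0; (iii) there exists (a,b) ≠ (0,0) with a·∂H/∂r(r,s,t) + b·∂H/∂s(r,s,t) = 0 for every t. Then for every k ≥ 1 the smooth map H̃ : ℝ^{k+2} → Eᵏ defined by H̃(r,s,t₁,…,t_k) = (H(r,s,t₁),…,H(r,s,t_k)) has Fréchet derivative of rank at most k+1 at every point of ℝ^{k+2}. (Consequently the pullback under H̃ of any (k+2)-form vanishes, which yields ⟨T_ω, g⟩ = ⟨T_ω, h⟩ for laminated rank-2 homotopic 2-paths g, h.) -/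

import Mathlib

open ContinuousLinearMap in
lemma lam_decomp {E : Type*} [NormedAddCommGroup E] [NormedSpace ℝ E]
    (D : (ℝ × ℝ × ℝ) →L[ℝ] E) (x y z : ℝ) :
    D (x, y, z) = x • D (1, 0, 0) + y • D (0, 1, 0) + z • D (0, 0, 1) := by
  have h : (x, y, z) = x • ((1:ℝ), (0:ℝ), (0:ℝ)) + y • ((0:ℝ), (1:ℝ), (0:ℝ))
      + z • ((0:ℝ), (0:ℝ), (1:ℝ)) := by
    simp [Prod.ext_iff]
  rw [h, map_add, map_add, map_smul, map_smul, map_smul]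

theorem laminated_rank_bound {E : Type*} [NormedAddCommGroup E] [NormedSpace ℝ E]
    (H : ℝ × ℝ × ℝ → E) (hH : ContDiff ℝ (⊤ : ℕ∞) H)
    (hlam : ∀ r s : ℝ,
      (∀ t : ℝ, ∃ a b : ℝ, (a, b) ≠ (0, 0) ∧
          a • fderiv ℝ H (r, s, t) (1, 0, 0) + b • fderiv ℝ H (r, s, t) (0, 0, 1) = 0) ∨
      (∀ t : ℝ, ∃ a b : ℝ, (a, b) ≠ (0, 0) ∧
          a • fderiv ℝ H (r, s, t) (0, 1, 0) + b • fderiv ℝ H (r, s, t) (0, 0, 1) = 0) ∨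
      (∃ a b : ℝ, (a, b) ≠ (0, 0) ∧ ∀ t : ℝ,
          a • fderiv ℝ H (r, s, t) (1, 0, 0) + b • fderiv ℝ H (r, s, t) (0, 1, 0) = 0))
    (k : ℕ) (hk : 1 ≤ k) (p : ℝ × ℝ × (Fin k → ℝ)) :
    Module.finrank ℝ
      (LinearMap.range
        (fderiv ℝ
          (fun q : ℝ × ℝ × (Fin k → ℝ) => fun i : Fin k => H (q.1, q.2.1, q.2.2 i))
          p).toLinearMap) ≤ k + 1 := by
  classical
  obtain ⟨r, s, t⟩ := p
  -- the linear projection φ i : (r,s,t) ↦ (r, s, t i)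
  set φ : Fin k → (ℝ × ℝ × (Fin k → ℝ)) →L[ℝ] ℝ × ℝ × ℝ := fun i =>
    (ContinuousLinearMap.fst ℝ ℝ (ℝ × (Fin k → ℝ))).prod
      ((ContinuousLinearMap.fst ℝ ℝ (Fin k → ℝ)).comp
          (ContinuousLinearMap.snd ℝ ℝ (ℝ × (Fin k → ℝ))) |>.prod
        ((ContinuousLinearMap.proj i).comp
          ((ContinuousLinearMap.snd ℝ ℝ (Fin k → ℝ)).comp
            (ContinuousLinearMap.snd ℝ ℝ (ℝ × (Fin k → ℝ)))))) with hφ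
  have hφapp : ∀ i (q : ℝ × ℝ × (Fin k → ℝ)), φ i q = (q.1, q.2.1, q.2.2 i) := by
    intro i q; rfl
  have hHdiff : Differentiable ℝ H := hH.differentiable (by simp)
  set L : (ℝ × ℝ × (Fin k → ℝ)) →L[ℝ] (Fin k → E) :=
    ContinuousLinearMap.pi
      (fun i => (fderiv ℝ H (r, s, t i)).comp (φ i)) with hL
  have hHas : HasFDerivAt
      (fun q : ℝ × ℝ × (Fin k → ℝ) => fun i : Fin k => H (q.1, q.2.1, q.2.2 i))
      L (r, s, t) := by
    rw [hL]
    apply hasFDerivAt_pi.2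
    intro i
    have h1 : HasFDerivAt H (fderiv ℝ H (r, s, t i)) (φ i (r, s, t)) := by
      rw [hφapp]
      exact (hHdiff _).hasFDerivAt
    exact h1.comp (r, s, t) ((φ i).hasFDerivAt)
  rw [hHas.fderiv]
  -- find a nonzero kernel element
  have key : ∃ v : ℝ × ℝ × (Fin k → ℝ), v ≠ 0 ∧ L v = 0 := by
    have hLapp : ∀ (v : ℝ × ℝ × (Fin k → ℝ)) (i : Fin k),
        L v i = v.1 • fderiv ℝ H (r, s, t i) (1, 0, 0)
          + v.2.1 • fderiv ℝ H (r, s, t i) (0, 1, 0)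
          + v.2.2 i • fderiv ℝ H (r, s, t i) (0, 0, 1) := by
      intro v i
      show (fderiv ℝ H (r, s, t i)) (φ i v) = _
      rw [hφapp]
      exact lam_decomp _ _ _ _
    rcases hlam r s with h | h | ⟨a, b, hab, h⟩
    · choose a b hab heq using fun i => h (t i)
      by_cases hz : ∃ j, a j = 0
      · obtain ⟨j, hj⟩ := hz
        have hbj : b j ≠ 0 := by
          intro hbj; exact hab j (by rw [hj, hbj])
        have hD : fderiv ℝ H (r, s, t j) (0, 0, 1) = 0 := by
          have := heq j
          rw [hj, zero_smul, zero_add] at this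
          exact (smul_eq_zero.1 this).resolve_left hbj
        refine ⟨(0, 0, Pi.single j 1), ?_, ?_⟩
        · simp only [Prod.ext_iff, ne_eq, not_and, funext_iff, not_forall, Prod.fst_zero,
            Prod.snd_zero, Pi.zero_apply]
          intro _ _; exact ⟨j, by simp⟩
        · funext i
          rw [Pi.zero_apply, hLapp]
          by_cases hij : i = j
          · subst hij; simp [hD]
          · simp [Pi.single_eq_of_ne hij]
      · push_neg at hz
        refine ⟨(1, 0, fun i => b i / a i), one_ne_zero ∘ congrArg Prod.fst, ?_⟩
        funext i
        rw [Pi.zero_apply, hLapp]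
        have := heq i
        have ha := hz i
        have : fderiv ℝ H (r, s, t i) (1, 0, 0)
            + (b i / a i) • fderiv ℝ H (r, s, t i) (0, 0, 1) = 0 := by
          have h2 := congrArg (fun x => (a i)⁻¹ • x) (heq i)
          simp only [smul_add, smul_smul, smul_zero] at h2
          rw [inv_mul_cancel₀ ha, one_smul] at h2
          rw [div_eq_inv_mul]
          exact h2
        simpa using this
    · choose a b hab heq using fun i => h (t i)
      by_cases hz : ∃ j, a j = 0
      · obtain ⟨j, hj⟩ := hz
        have hbj : b j ≠ 0 := by
          intro hbj; exact hab j (by rw [hj, hbj])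
        have hD : fderiv ℝ H (r, s, t j) (0, 0, 1) = 0 := by
          have := heq j
          rw [hj, zero_smul, zero_add] at this
          exact (smul_eq_zero.1 this).resolve_left hbj
        refine ⟨(0, 0, Pi.single j 1), ?_, ?_⟩
        · simp only [Prod.ext_iff, ne_eq, not_and, funext_iff, not_forall, Prod.fst_zero,
            Prod.snd_zero, Pi.zero_apply]
          intro _ _; exact ⟨j, by simp⟩
        · funext i
          rw [Pi.zero_apply, hLapp]
          by_cases hij : i = j
          · subst hij; simp [hD]
          · simp [Pi.single_eq_of_ne hij]
      · push_neg at hz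
        refine ⟨(0, 1, fun i => b i / a i), ?_, ?_⟩
        · intro h0
          exact one_ne_zero (congrArg (fun x => x.2.1) h0)
        funext i
        rw [Pi.zero_apply, hLapp]
        have ha := hz i
        have h3 : fderiv ℝ H (r, s, t i) (0, 1, 0)
            + (b i / a i) • fderiv ℝ H (r, s, t i) (0, 0, 1) = 0 := by
          have h2 := congrArg (fun x => (a i)⁻¹ • x) (heq i)
          simp only [smul_add, smul_smul, smul_zero] at h2
          rw [inv_mul_cancel₀ ha, one_smul] at h2
          rw [div_eq_inv_mul]
          exact h2
        simpa using h3
    · refine ⟨(a, b, 0), ?_, ?_⟩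
      · intro h0
        apply hab
        have h1 := congrArg Prod.fst h0
        have h2 := congrArg (fun x => x.2.1) h0
        simp at h1 h2
        simp [h1, h2]
      funext i
      rw [Pi.zero_apply, hLapp]
      simpa using h (t i)
  obtain ⟨v, hv0, hvK⟩ := key
  have hrn := LinearMap.finrank_range_add_finrank_ker (L.toLinearMap)
  have hker : 0 < Module.finrank ℝ (LinearMap.ker L.toLinearMap) := by
    rw [Module.finrank_pos_iff]
    exact ⟨⟨⟨v, hvK⟩, 0, fun h => hv0 (congrArg Subtype.val h)⟩⟩
  have hdom : Module.finrank ℝ (ℝ × ℝ × (Fin k → ℝ)) = k + 2 := by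
    simp [Module.finrank_prod, Module.finrank_pi]
    ring
  rw [hdom] at hrn
  omega
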